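/- arXiv:2202.07484 — 5 statements merged into one kernel-verified Lean document; each statement's English description precedes it below -/
import Mathlib

section
/- Let x ∈ L²(ℝ, ℂ) and let g : ℝ → ℂ be continuously differentiable with g ∈ L²(ℝ) and g' ∈ L²(ℝ). Then for every ω ∈ ℝ, the function t ↦ V_g x(t, ω) is differentiable on ℝ, and its derivative satisfies ∂/∂t V_g x(t, ω) = − V_{g'} x(t, ω), i.e. the derivative at t of s ↦ ∫_ℝ x(τ) · conj(g(τ − s)) · exp(−2πiωτ) dτ equals − ∫_ℝ x(τ) · conj(g'(τ − t)) · exp(−2πiωτ) dτ. -/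
open MeasureTheory Complex Real

/-- Frequency-invariant STFT:
`V_g x (t, ω) = ∫ τ, x τ * conj (g (τ - t)) * exp (-2πiωτ)`. -/
noncomputable def stftFreqInv (g x : ℝ → ℂ) (t ω : ℝ) : ℂ :=
  ∫ τ : ℝ, x τ * (starRingEnd ℂ) (g (τ - t)) *
    Complex.exp (-2 * Real.pi * Complex.I * (ω : ℂ) * (τ : ℂ))

/-!
Integrating the fundamental theorem of calculus for `g` against `x τ e^{-2πiωτ}` and swapping the
two integrals (Fubini, justified because both factors are square integrable and the time interval
has finite length) gives `V_g x(a, ω) - V_g x(b, ω) = ∫_a^b V_{g'} x(u, ω) du`. The integrand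
`u ↦ V_{g'} x(u, ω)` is an `L²` inner product against the translate of `g'` by `u`, hence
continuous, so the fundamental theorem of calculus in `u` gives the derivative. Differentiating under the
integral sign directly would need a local bound on `g'`, which is not available.
-/

open scoped ComplexConjugate

theorem MeasureTheory.MemLp.integrable_mul_comp_sub_prod {𝕜 : Type*} [NormedRing 𝕜]
    {p q : ENNReal} [p.HolderTriple q 1] {φ h : ℝ → 𝕜} (hφ : MemLp φ p) (hh : MemLp h q)
    (ν : Measure ℝ) [IsFiniteMeasure ν] :
    Integrable (fun z : ℝ × ℝ => φ z.2 * h (z.2 - z.1)) (ν.prod volume) :=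
  (hφ.comp_snd ν).integrable_mul
    ((hh.comp_snd ν).comp_measurePreserving (measurePreserving_prod_sub ν volume))

theorem MeasureTheory.MemLp.integrable_mul_comp_sub {𝕜 : Type*} [NormedRing 𝕜]
    {p q : ENNReal} [p.HolderTriple q 1] {φ h : ℝ → 𝕜} (hφ : MemLp φ p) (hh : MemLp h q)
    (u : ℝ) :
    Integrable (fun τ => φ τ * h (τ - u)) :=
  hφ.integrable_mul (hh.comp_measurePreserving (measurePreserving_sub_right volume u))

theorem sub_eq_intervalIntegral_deriv_comp_const_sub {E : Type*} [NormedAddCommGroup E]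
    [NormedSpace ℝ E] [CompleteSpace E] {g : ℝ → E} (hg : ContDiff ℝ 1 g) (c a b : ℝ) :
    g (c - a) - g (c - b) = ∫ u in a..b, deriv g (c - u) := by
  rw [intervalIntegral.integral_comp_sub_left, intervalIntegral.integral_deriv_eq_sub
    (fun y _ => (hg.differentiable one_ne_zero).differentiableAt)
    ((hg.continuous_deriv le_rfl).intervalIntegrable _ _)]

noncomputable def crossCorrelation (φ h : ℝ → ℂ) (u : ℝ) : ℂ :=
  ∫ τ, φ τ * conj (h (τ - u))

theorem continuous_crossCorrelation {φ h : ℝ → ℂ} (hφ : MemLp φ 2) (hh : MemLp h 2) :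
    Continuous (crossCorrelation φ h) := by
  let translate (u : ℝ) : C(ℝ, ℝ) := ⟨fun τ => τ - u, by fun_prop⟩
  have hmp (u : ℝ) : MeasurePreserving (translate u) := measurePreserving_sub_right volume u
  have htranslate : Continuous translate :=
    ContinuousMap.continuous_of_continuous_uncurry _ (continuous_snd.sub continuous_fst)
  have hT : Continuous fun u => Lp.compMeasurePreserving (translate u) (hmp u) (hh.toLp h) :=
    continuous_const.compMeasurePreservingLp htranslate hmp (by norm_num)
  convert hT.inner (𝕜 := ℂ) (continuous_const (y := hφ.toLp φ)) using 1
  ext u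
  rw [L2.inner_def]
  refine integral_congr_ae ?_
  filter_upwards [(hmp u).quasiMeasurePreserving.ae_eq_comp hh.coeFn_toLp,
    Lp.coeFn_compMeasurePreserving (hh.toLp h) (hmp u), hφ.coeFn_toLp] with τ hT hT' hΦ
  simp only [RCLike.inner_apply, hT', hΦ, Function.comp_apply] at hT ⊢
  rw [hT]
  rfl

theorem crossCorrelation_sub_crossCorrelation {φ g : ℝ → ℂ} (hφ : MemLp φ 2) (hg : ContDiff ℝ 1 g)
    (hg₂ : MemLp g 2) (hg' : MemLp (deriv g) 2) (a b : ℝ) :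
    crossCorrelation φ g a - crossCorrelation φ g b =
      ∫ u in a..b, crossCorrelation φ (deriv g) u := by
  have hint (u : ℝ) : Integrable fun τ => φ τ * conj (g (τ - u)) :=
    hφ.integrable_mul_comp_sub hg₂.star u
  have hint_prod : Integrable (Function.uncurry fun u τ => φ τ * conj (deriv g (τ - u)))
      ((volume.restrict (Set.uIoc a b)).prod volume) :=
    have : IsFiniteMeasure (volume.restrict (Set.uIoc a b)) := isFiniteMeasure_restrict_Ioc _ _
    hφ.integrable_mul_comp_sub_prod hg'.star _
  calc crossCorrelation φ g a - crossCorrelation φ g b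
      = ∫ τ, (φ τ * conj (g (τ - a)) - φ τ * conj (g (τ - b))) :=
        (integral_sub (hint a) (hint b)).symm
    _ = ∫ τ, ∫ u in a..b, φ τ * conj (deriv g (τ - u)) := by
        congr 1 with τ
        rw [← mul_sub, ← map_sub, sub_eq_intervalIntegral_deriv_comp_const_sub hg,
          intervalIntegral.integral_const_mul]
        congr 1
        exact (conjLIE.toLinearIsometry.intervalIntegral_comp_comm _).symm
    _ = ∫ u in a..b, crossCorrelation φ (deriv g) u :=
        (intervalIntegral_integral_swap hint_prod).symm

theorem hasDerivAt_crossCorrelation {φ g : ℝ → ℂ} (hφ : MemLp φ 2) (hg : ContDiff ℝ 1 g)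
    (hg₂ : MemLp g 2) (hg' : MemLp (deriv g) 2) (t : ℝ) :
    HasDerivAt (crossCorrelation φ g) (-crossCorrelation φ (deriv g) t) t := by
  have hFTC := ((continuous_crossCorrelation hφ hg').integral_hasStrictDerivAt t t).hasDerivAt
  refine (hFTC.const_sub (crossCorrelation φ g t)).congr_of_eventuallyEq (.of_forall fun s => ?_)
  dsimp only
  rw [← crossCorrelation_sub_crossCorrelation hφ hg hg₂ hg' t s, sub_sub_cancel]

theorem stftFreqInv_eq_crossCorrelation (g x : ℝ → ℂ) (t ω : ℝ) :
    stftFreqInv g x t ω =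
      crossCorrelation (fun τ => x τ * cexp (-2 * π * I * ω * τ)) g t := by
  simp only [stftFreqInv, crossCorrelation, mul_right_comm]

/-- For `x ∈ L²` and `g` continuously differentiable with `g, g' ∈ L²`,
for every `ω` the map `t ↦ V_g x (t, ω)` is differentiable with derivative
`∂_t V_g x (t, ω) = − V_{g'} x (t, ω)`. -/
theorem stftFreqInv_hasDerivAt_time
    (x g : ℝ → ℂ)
    (hx : MemLp x 2 (volume : Measure ℝ))
    (hg_smooth : ContDiff ℝ 1 g)
    (hg : MemLp g 2 (volume : Measure ℝ))
    (hg' : MemLp (deriv g) 2 (volume : Measure ℝ)) :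
    ∀ ω t : ℝ,
      HasDerivAt (fun s : ℝ => stftFreqInv g x s ω)
        (-(stftFreqInv (deriv g) x t ω)) t := by
  intro ω t
  have hmod : MemLp (fun τ => x τ * cexp (-2 * π * I * ω * τ)) 2 :=
    hx.of_le (hx.1.mul (by fun_prop)) (.of_forall fun τ => by simp [Complex.norm_exp])
  simp only [stftFreqInv_eq_crossCorrelation]
  exact hasDerivAt_crossCorrelation hmod hg_smooth hg hg' t
end

section
/- Let x ∈ L²(ℝ, ℂ) and let g : ℝ → ℂ be such that g ∈ L²(ℝ) and the time-weighted window Tg, given by Tg(τ) = τ·g(τ), is in L²(ℝ). Then for every t ∈ ℝ, the function ω ↦ V_g x(t, ω) is differentiable on ℝ, and its derivative satisfies ∂/∂ω V_g x(t, ω) = −2πi · ( V_{Tg} x(t, ω) + t · V_g x(t, ω) ). -/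
/-!
For fixed `t`, `ω ↦ V_g x (t, ω)` is the Fourier transform of `F τ = x τ * conj (g (τ - t))`,
which is integrable by Cauchy–Schwarz. Since `τ F τ = x τ * conj (Tg (τ - t)) + t F τ`, the
function `τ F τ` is integrable as well, so the Fourier transform of `F` may be differentiated
under the integral sign, and linearity splits the result into `V_{Tg} x + t V_g x`.
-/

open MeasureTheory Complex Real

open FourierTransform ENNReal ComplexConjugate

section Fourier

variable {V E : Type*} [NormedAddCommGroup V] [InnerProductSpace ℝ V] [MeasurableSpace V]
  [BorelSpace V] [FiniteDimensional ℝ V] [NormedAddCommGroup E] [NormedSpace ℂ E]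

theorem Real.fourier_add_of_integrable {f g : V → E} (hf : Integrable f) (hg : Integrable g) :
    𝓕 (f + g) = 𝓕 f + 𝓕 g :=
  VectorFourier.fourierIntegral_add continuous_fourierChar continuous_inner hf hg

theorem Real.fourier_const_smul (r : ℂ) (f : V → E) : 𝓕 (r • f) = r • 𝓕 f :=
  VectorFourier.fourierIntegral_const_smul _ _ _ _ _

end Fourier

def windowedSignal (g x : ℝ → ℂ) (t : ℝ) : ℝ → ℂ := fun τ => x τ * conj (g (τ - t))

theorem integrable_windowedSignal {p q : ℝ≥0∞} [HolderTriple p q 1] {g x : ℝ → ℂ}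
    (hx : MemLp x p) (hg : MemLp g q) (t : ℝ) : Integrable (windowedSignal g x t) :=
  hx.integrable_mul (hg.comp_measurePreserving (measurePreserving_sub_right volume t)).star

theorem stftFreqInv_eq_fourier_windowedSignal (g x : ℝ → ℂ) (t : ℝ) :
    stftFreqInv g x t = 𝓕 (windowedSignal g x t) := by
  ext ω
  rw [Real.fourier_real_eq_integral_exp_smul, stftFreqInv]
  congr 1 with τ
  rw [smul_eq_mul, mul_comm, windowedSignal]
  congr 2
  push_cast
  ring

theorem smul_windowedSignal (g x : ℝ → ℂ) (t : ℝ) :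
    (fun τ : ℝ => τ • windowedSignal g x t τ) =
      windowedSignal (fun τ => (τ : ℂ) * g τ) x t + (t : ℂ) • windowedSignal g x t := by
  ext τ
  simp only [windowedSignal, Pi.add_apply, Pi.smul_apply, map_mul, conj_ofReal, real_smul,
    smul_eq_mul]
  push_cast
  ring

/-- For `x ∈ L²` and `g` with `g, Tg ∈ L²` (where `Tg τ = τ • g τ`),
for every `t` the map `ω ↦ V_g x (t, ω)` is differentiable with derivative
`∂_ω V_g x (t, ω) = −2πi (V_{Tg} x (t, ω) + t · V_g x (t, ω))`. -/
theorem stftFreqInv_hasDerivAt_freq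
    (x g : ℝ → ℂ)
    (hx : MemLp x 2 (volume : Measure ℝ))
    (hg : MemLp g 2 (volume : Measure ℝ))
    (hTg : MemLp (fun τ : ℝ => (τ : ℂ) * g τ) 2 (volume : Measure ℝ)) :
    ∀ t ω : ℝ,
      HasDerivAt (fun ν : ℝ => stftFreqInv g x t ν)
        (-2 * Real.pi * Complex.I *
          (stftFreqInv (fun τ : ℝ => (τ : ℂ) * g τ) x t ω +
            (t : ℂ) * stftFreqInv g x t ω)) ω := by
  intro t ω
  have hF := integrable_windowedSignal hx hg t
  have hTF := integrable_windowedSignal hx hTg t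
  have hτF : Integrable (fun τ : ℝ => τ • windowedSignal g x t τ) := by
    rw [smul_windowedSignal]
    exact hTF.add (hF.smul _)
  have hmul : (fun τ : ℝ => (-2 * π * I * τ) • windowedSignal g x t τ) =
      (-2 * π * I) • fun τ : ℝ => τ • windowedSignal g x t τ := by
    ext τ
    simp only [Pi.smul_apply, smul_eq_mul, real_smul]
    ring
  have hderiv : HasDerivAt (stftFreqInv g x t)
      (𝓕 (fun τ : ℝ => (-2 * π * I * τ) • windowedSignal g x t τ) ω) ω := by
    rw [stftFreqInv_eq_fourier_windowedSignal]
    exact Real.hasDerivAt_fourier hF hτF ω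
  refine hderiv.congr_deriv ?_
  rw [hmul, Real.fourier_const_smul, smul_windowedSignal, Real.fourier_add_of_integrable hTF
    (hF.smul _), Real.fourier_const_smul, ← stftFreqInv_eq_fourier_windowedSignal,
    ← stftFreqInv_eq_fourier_windowedSignal]
  simp only [Pi.smul_apply, Pi.add_apply, smul_eq_mul]
end

section
/- (CIF formula of Proposition 1.) Let x ∈ L²(ℝ, ℂ) and let g : ℝ → ℂ be continuously differentiable with g ∈ L²(ℝ) and g' ∈ L²(ℝ). Fix ω ∈ ℝ and suppose there are r, Φ : ℝ → ℝ with V_g x(s, ω) = r(s) · exp(2πi·Φ(s)) for all s in a neighbourhood of t, where r and Φ are differentiable at t and r(t) > 0. Then the channelized instantaneous frequency satisfies Φ'(t) = −(1/(2π)) · Im( V_{g'} x(t, ω) / V_g x(t, ω) ). -/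
/-!
Differentiating the polar form gives `∂ₛV = (r'/r + 2πiΦ') V`, so `Φ' = Im (∂ₛV / V) / (2π)`,
and it remains to show `∂ₛ V_g x (s, ω) = -V_{g'} x (s, ω)`. Since
`V_g x (s, ω) = ⟪g (· - s), x · e^{-2πiω·}⟫` in `L²`, this follows from the differentiability of
the translation `s ↦ g (· - s)` in `L²`, with derivative `-g' (· - s)`. For that, write the
remainder as `g (τ - s) - g (τ - t) + (s - t) g' (τ - t) = ∫_t^s (g' (τ - t) - g' (τ - u)) du`;
Cauchy–Schwarz in `u` and Tonelli bound its `L²` norm by `|s - t|` times the largest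
`‖g' (· - t) - g' (· - u)‖₂` with `u` between `t` and `s`, which tends to `0` because translation
is continuous on `L²`.
-/

open MeasureTheory Complex Real Filter

open Set
open scoped ENNReal InnerProductSpace Interval

section Translation

variable {E : Type*} [NormedAddCommGroup E] {p : ℝ≥0∞}

noncomputable def translateLp (s : ℝ) (f : Lp E p (volume : Measure ℝ)) :
    Lp E p (volume : Measure ℝ) :=
  Lp.compMeasurePreserving (· - s) (measurePreserving_sub_right volume s) f

theorem coeFn_translateLp {f : Lp E p (volume : Measure ℝ)} {φ : ℝ → E} (hφ : f =ᵐ[volume] φ)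
    (s : ℝ) : translateLp s f =ᵐ[volume] fun τ => φ (τ - s) :=
  (Lp.coeFn_compMeasurePreserving _ _).trans
    ((measurePreserving_sub_right volume s).quasiMeasurePreserving.ae_eq_comp hφ)

theorem continuous_translateLp [Fact (1 ≤ p)] (hp : p ≠ ∞) (f : Lp E p (volume : Measure ℝ)) :
    Continuous fun s => translateLp s f :=
  continuous_const.compMeasurePreservingLp (g := fun s => ⟨fun τ : ℝ => τ - s, by fun_prop⟩)
    (ContinuousMap.continuous_of_continuous_uncurry _ (continuous_snd.sub continuous_fst))
    (fun s => measurePreserving_sub_right volume s) hp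

end Translation

theorem eLpNorm_two_pow_two {α E : Type*} [MeasurableSpace α] [NormedAddCommGroup E]
    {μ : Measure α} (f : α → E) :
    eLpNorm f 2 μ ^ 2 = ∫⁻ x, ‖f x‖ₑ ^ 2 ∂μ := by
  simpa using eLpNorm_nnreal_pow_eq_lintegral (f := f) (μ := μ) (p := 2) two_ne_zero

theorem sq_setLIntegral_enorm_le {β E : Type*} [MeasurableSpace β] [NormedAddCommGroup E]
    {ν : Measure β} {f : β → E} (hf : AEStronglyMeasurable f ν) (A : Set β) :
    (∫⁻ u in A, ‖f u‖ₑ ∂ν) ^ 2 ≤ ν A * ∫⁻ u in A, ‖f u‖ₑ ^ 2 ∂ν := by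
  have hL1L2 := eLpNorm_le_eLpNorm_mul_rpow_measure_univ (μ := ν.restrict A) (p := 1) (q := 2)
    one_le_two hf.restrict
  rw [eLpNorm_one_eq_lintegral_enorm, Measure.restrict_apply_univ] at hL1L2
  calc (∫⁻ u in A, ‖f u‖ₑ ∂ν) ^ 2 ≤ (eLpNorm f 2 (ν.restrict A) * ν A ^ (1 / 2 : ℝ)) ^ 2 := by
        gcongr
        norm_num at hL1L2 ⊢
        exact hL1L2
    _ = _ := by
        rw [mul_pow, eLpNorm_two_pow_two, ← ENNReal.rpow_natCast, ← ENNReal.rpow_mul]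
        norm_num [mul_comm]

theorem lintegral_sq_setLIntegral_enorm_le {α β E : Type*} [MeasurableSpace α] [MeasurableSpace β]
    [NormedAddCommGroup E] {μ : Measure α} {ν : Measure β} [SFinite μ] [SFinite ν]
    {q : α → β → E} (hq : StronglyMeasurable (Function.uncurry q)) (A : Set β) {c : ℝ≥0∞}
    (hc : ∀ u ∈ A, eLpNorm (q · u) 2 μ ≤ c) :
    ∫⁻ τ, (∫⁻ u in A, ‖q τ u‖ₑ ∂ν) ^ 2 ∂μ ≤ (ν A * c) ^ 2 := by
  have hmeas : Measurable fun z : α × β => ‖q z.1 z.2‖ₑ ^ 2 := hq.enorm.pow_const 2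
  calc ∫⁻ τ, (∫⁻ u in A, ‖q τ u‖ₑ ∂ν) ^ 2 ∂μ
      ≤ ∫⁻ τ, ν A * ∫⁻ u in A, ‖q τ u‖ₑ ^ 2 ∂ν ∂μ := by
        refine lintegral_mono fun τ => sq_setLIntegral_enorm_le ?_ A
        exact (hq.comp_measurable measurable_prodMk_left).aestronglyMeasurable
    _ = ν A * ∫⁻ u in A, ∫⁻ τ, ‖q τ u‖ₑ ^ 2 ∂μ ∂ν := by
        rw [lintegral_const_mul _ hmeas.lintegral_prod_right',
          lintegral_lintegral_swap hmeas.aemeasurable]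
    _ ≤ ν A * ∫⁻ _ in A, c ^ 2 ∂ν := by
        refine mul_le_mul_right (setLIntegral_mono measurable_const fun u hu => ?_) _
        rw [← eLpNorm_two_pow_two]
        exact pow_le_pow_left' (hc u hu) 2
    _ = (ν A * c) ^ 2 := by rw [setLIntegral_const]; ring

theorem eLpNorm_intervalIntegral_le {α F : Type*} [MeasurableSpace α] [NormedAddCommGroup F]
    [NormedSpace ℝ F] {μ : Measure α} [SFinite μ] {q : α → ℝ → F}
    (hq : StronglyMeasurable (Function.uncurry q)) {a b : ℝ} {c : ℝ≥0∞}
    (hc : ∀ u ∈ Ι a b, eLpNorm (q · u) 2 μ ≤ c) :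
    eLpNorm (fun τ => ∫ u in a..b, q τ u) 2 μ ≤ ENNReal.ofReal |b - a| * c := by
  have hpt (τ : α) : ‖∫ u in a..b, q τ u‖ₑ ≤ ∫⁻ u in Ι a b, ‖q τ u‖ₑ := by
    rw [← ofReal_norm, intervalIntegral.norm_integral_eq_norm_integral_uIoc, ofReal_norm]
    exact enorm_integral_le_lintegral_enorm _
  rw [← ENNReal.pow_le_pow_left_iff two_ne_zero, eLpNorm_two_pow_two, ← Real.volume_uIoc]
  calc ∫⁻ τ, ‖∫ u in a..b, q τ u‖ₑ ^ 2 ∂μ ≤ ∫⁻ τ, (∫⁻ u in Ι a b, ‖q τ u‖ₑ) ^ 2 ∂μ :=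
        lintegral_mono fun τ => pow_le_pow_left' (hpt τ) 2
    _ ≤ _ := lintegral_sq_setLIntegral_enorm_le hq _ hc

section Derivative

variable {E : Type*} [NormedAddCommGroup E] [NormedSpace ℝ E] [CompleteSpace E]

theorem comp_sub_sub_add_smul_deriv_eq_integral {g : ℝ → E} (hg : ContDiff ℝ 1 g) (τ t s : ℝ) :
    g (τ - s) - g (τ - t) + (s - t) • deriv g (τ - t) =
      ∫ u in t..s, (deriv g (τ - t) - deriv g (τ - u)) := by
  have hg' : Continuous (deriv g) := hg.continuous_deriv le_rfl
  have hFTC : ∫ u in t..s, deriv g (τ - u) = g (τ - t) - g (τ - s) := by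
    rw [intervalIntegral.integral_comp_sub_left (deriv g) τ,
      intervalIntegral.integral_deriv_eq_sub' g rfl
        (fun v _ => hg.differentiable one_ne_zero v) hg'.continuousOn]
  rw [intervalIntegral.integral_sub intervalIntegrable_const
    ((by fun_prop : Continuous fun u => deriv g (τ - u)).intervalIntegrable t s),
    intervalIntegral.integral_const, hFTC]
  abel

theorem hasDerivAt_translateLp {g : ℝ → E} (hg : ContDiff ℝ 1 g)
    {f f' : Lp E 2 (volume : Measure ℝ)} (hf : f =ᵐ[volume] g) (hf' : f' =ᵐ[volume] deriv g)
    (t : ℝ) :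
    HasDerivAt (fun s => translateLp s f) (-translateLp t f') t := by
  let q : ℝ → ℝ → E := fun τ u => deriv g (τ - t) - deriv g (τ - u)
  have hq : Continuous (Function.uncurry q) := by
    have := hg.continuous_deriv le_rfl
    fun_prop
  rw [hasDerivAt_iff_isLittleO, Asymptotics.isLittleO_iff]
  intro c hc
  obtain ⟨δ, hδ, hcont⟩ := Metric.continuousAt_iff.mp
    (continuous_translateLp ENNReal.ofNat_ne_top f').continuousAt c hc
  filter_upwards [Metric.ball_mem_nhds t hδ] with s hs
  have hrem : ⇑(translateLp s f - translateLp t f - (s - t) • -translateLp t f')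
      =ᵐ[volume] fun τ => ∫ u in t..s, q τ u := by
    filter_upwards [Lp.coeFn_sub (translateLp s f - translateLp t f) ((s - t) • -translateLp t f'),
      Lp.coeFn_sub (translateLp s f) (translateLp t f), Lp.coeFn_smul (s - t) (-translateLp t f'),
      Lp.coeFn_neg (translateLp t f'), coeFn_translateLp hf s, coeFn_translateLp hf t,
      coeFn_translateLp hf' t] with τ h₁ h₂ h₃ h₄ h₅ h₆ h₇
    rw [h₁, Pi.sub_apply, h₂, Pi.sub_apply, h₃, Pi.smul_apply, h₄, Pi.neg_apply, h₅, h₆, h₇,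
      smul_neg, sub_neg_eq_add]
    exact comp_sub_sub_add_smul_deriv_eq_integral hg τ t s
  have hbound : eLpNorm (fun τ => ∫ u in t..s, q τ u) 2 volume
      ≤ ENNReal.ofReal |s - t| * ENNReal.ofReal c := by
    refine eLpNorm_intervalIntegral_le hq.stronglyMeasurable fun u hu => ?_
    have hut : dist u t < δ :=
      (abs_sub_left_of_mem_uIcc (uIoc_subset_uIcc hu)).trans_lt (Metric.mem_ball.mp hs)
    have hdiff : ⇑(translateLp t f') - ⇑(translateLp u f') =ᵐ[volume] (q · u) := by
      filter_upwards [coeFn_translateLp hf' t, coeFn_translateLp hf' u] with τ h₁ h₂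
      rw [Pi.sub_apply, h₁, h₂]
    rw [← eLpNorm_congr_ae hdiff, ← Lp.edist_def, edist_comm]
    exact (edist_le_ofReal hc.le).mpr (hcont hut).le
  rw [Lp.norm_def, eLpNorm_congr_ae hrem, Real.norm_eq_abs, mul_comm]
  calc _ ≤ (ENNReal.ofReal |s - t| * ENNReal.ofReal c).toReal :=
        ENNReal.toReal_mono (by finiteness) hbound
    _ = |s - t| * c := by
        rw [← ENNReal.ofReal_mul (abs_nonneg _), ENNReal.toReal_ofReal (by positivity)]

end Derivative

theorem MeasureTheory.MemLp.mul_cexp_neg_two_pi_I {μ : Measure ℝ} {p : ℝ≥0∞} {x : ℝ → ℂ}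
    (hx : MemLp x p μ) (ω : ℝ) : MemLp (fun τ => x τ * cexp (-2 * π * I * ω * τ)) p μ := by
  refine hx.of_le (hx.aestronglyMeasurable.mul (by fun_prop : Continuous
    fun τ : ℝ => cexp (-2 * π * I * ω * τ)).aestronglyMeasurable) (.of_forall fun τ => ?_)
  rw [norm_mul, Complex.norm_exp]
  simp

theorem stftFreqInv_eq_inner {g x : ℝ → ℂ} (hg : MemLp g 2 (volume : Measure ℝ))
    (hx : MemLp x 2 (volume : Measure ℝ)) (s ω : ℝ) :
    stftFreqInv g x s ω =
      ⟪translateLp s (hg.toLp g), (hx.mul_cexp_neg_two_pi_I ω).toLp _⟫_ℂ := by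
  rw [L2.inner_def]
  refine integral_congr_ae ?_
  filter_upwards [coeFn_translateLp hg.coeFn_toLp s, (hx.mul_cexp_neg_two_pi_I ω).coeFn_toLp]
    with τ h₁ h₂
  rw [h₁, h₂, RCLike.inner_apply]
  ring

theorem hasDerivAt_stftFreqInv {g x : ℝ → ℂ} (hg_smooth : ContDiff ℝ 1 g)
    (hg : MemLp g 2 (volume : Measure ℝ)) (hg' : MemLp (deriv g) 2 (volume : Measure ℝ))
    (hx : MemLp x 2 (volume : Measure ℝ)) (ω t : ℝ) :
    HasDerivAt (fun s => stftFreqInv g x s ω) (-stftFreqInv (deriv g) x t ω) t := by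
  have h := (hasDerivAt_translateLp hg_smooth hg.coeFn_toLp hg'.coeFn_toLp t).inner ℂ
    (hasDerivAt_const t ((hx.mul_cexp_neg_two_pi_I ω).toLp _))
  simp_rw [stftFreqInv_eq_inner hg hx, stftFreqInv_eq_inner hg' hx]
  simpa using h

theorem phase_deriv_eq_im_div {V : ℝ → ℂ} {V' : ℂ} {r Φ : ℝ → ℝ} {r' Φ' t : ℝ}
    (hV : HasDerivAt V V' t) (hpolar : ∀ᶠ s in nhds t, V s = r s * cexp (2 * π * I * Φ s))
    (hr : HasDerivAt r r' t) (hΦ : HasDerivAt Φ Φ' t) (hrt : r t ≠ 0) :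
    Φ' = (V' / V t).im / (2 * π) := by
  set E := cexp (2 * π * I * Φ t)
  have hpolar' : HasDerivAt V (r' * E + r t * (E * (2 * π * I * Φ'))) t :=
    (hr.ofReal_comp.mul (hΦ.ofReal_comp.const_mul _).cexp).congr_of_eventuallyEq hpolar
  rw [hV.unique hpolar', hpolar.self_of_nhds]
  have hrt' : (r t : ℂ) ≠ 0 := by exact_mod_cast hrt
  have hquot : (r' * E + r t * (E * (2 * π * I * Φ'))) / (r t * E)
      = ((r' / r t : ℝ) : ℂ) + ((2 * π * Φ' : ℝ) : ℂ) * I := by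
    have hE : E ≠ 0 := exp_ne_zero _
    push_cast
    field_simp
  rw [hquot, add_im, ofReal_im, zero_add, mul_I_im, ofReal_re]
  field_simp

/-- CIF formula of Proposition 1: For `x ∈ L²`, `g` continuously
differentiable with `g, g' ∈ L²`, if near `t` we have the polar decomposition
`V_g x (·, ω) = r · exp(2πiΦ)` with `r`, `Φ` differentiable at `t` and `r t > 0`, then
`Φ' t = −(1/(2π)) · Im (V_{g'} x (t, ω) / V_g x (t, ω))`. -/
theorem cif_formula
    (x g : ℝ → ℂ)
    (hx : MemLp x 2 (volume : Measure ℝ))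
    (hg_smooth : ContDiff ℝ 1 g)
    (hg : MemLp g 2 (volume : Measure ℝ))
    (hg' : MemLp (deriv g) 2 (volume : Measure ℝ))
    (ω t : ℝ) (r Φ : ℝ → ℝ) (r' Φ' : ℝ)
    (hpolar : ∀ᶠ s in nhds t,
      stftFreqInv g x s ω =
        (r s : ℂ) * Complex.exp (2 * Real.pi * Complex.I * (Φ s : ℂ)))
    (hr : HasDerivAt r r' t)
    (hΦ : HasDerivAt Φ Φ' t)
    (hrpos : 0 < r t) :
    Φ' = -(1 / (2 * Real.pi)) *
      (stftFreqInv (deriv g) x t ω / stftFreqInv g x t ω).im := by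
  rw [phase_deriv_eq_im_div (hasDerivAt_stftFreqInv hg_smooth hg hg' hx ω t) hpolar hr hΦ
    hrpos.ne', neg_div, neg_im]
  ring
end

section
/- (Lemma 1, CIF of a sinusoid.) Let ξ₀ ∈ ℝ and x(τ) = exp(2πi·ξ₀·τ). Let g : ℝ → ℂ be continuously differentiable with g ∈ L¹(ℝ) and g' ∈ L¹(ℝ). Then for all t, ω ∈ ℝ with ĝ(ξ₀ − ω) ≠ 0 (where ĝ(ξ) = ∫_ℝ g(u)·exp(−2πiξu) du), the channelized instantaneous frequency computed from the frequency-invariant STFT satisfies −(1/(2π)) · Im( V_{g'} x(t, ω) / V_g x(t, ω) ) = ξ₀ − ω. -/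
open MeasureTheory Complex Real

/-- The Fourier transform `ĝ ξ = ∫ u, g u * exp(-2πiξu)`. -/
noncomputable def fourierTf (g : ℝ → ℂ) (ξ : ℝ) : ℂ :=
  ∫ u : ℝ, g u * Complex.exp (-2 * Real.pi * Complex.I * (ξ : ℂ) * (u : ℂ))

/-!
The sinusoid `x τ = e^{2πiξ₀τ}` turns the STFT into a modulated conjugate Fourier transform:
substituting `τ = u + t` gives `V_g x (t, ω) = e^{2πi(ξ₀-ω)t} · conj (ĝ (ξ₀ - ω))`, for every
window `g`. Since `(g')^ ξ = 2πiξ · ĝ ξ`, the quotient `V_{g'} x / V_g x` is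
`conj (2πi(ξ₀ - ω)) = -2πi(ξ₀ - ω)` wherever `ĝ (ξ₀ - ω) ≠ 0`.
-/

open ComplexConjugate FourierTransform

lemma fourierTf_eq_fourier (g : ℝ → ℂ) : fourierTf g = 𝓕 g := by
  ext ξ
  rw [Real.fourier_real_eq_integral_exp_smul, fourierTf]
  congr 1 with u
  rw [smul_eq_mul, mul_comm]
  congr 2
  push_cast
  ring

lemma fourierTf_deriv {g : ℝ → ℂ} (hg : Integrable g) (hg_diff : Differentiable ℝ g)
    (hg' : Integrable (deriv g)) (ξ : ℝ) :
    fourierTf (deriv g) ξ = 2 * π * I * ξ * fourierTf g ξ := by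
  simp [fourierTf_eq_fourier, Real.fourier_deriv hg hg_diff hg']

lemma stftFreqInv_sinusoid (g : ℝ → ℂ) (ξ₀ t ω : ℝ) :
    stftFreqInv g (fun τ : ℝ => exp (2 * π * I * ξ₀ * τ)) t ω
      = exp (2 * π * I * (ξ₀ - ω : ℝ) * t) * conj (fourierTf g (ξ₀ - ω)) := by
  have integrand_shift (τ : ℝ) :
      exp (2 * π * I * ξ₀ * τ) * conj (g (τ - t)) * exp (-2 * π * I * ω * τ)
        = exp (2 * π * I * (ξ₀ - ω : ℝ) * t) *
          conj (g (τ - t) * exp (-2 * π * I * (ξ₀ - ω : ℝ) * (τ - t : ℝ))) := by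
    have phase : exp (2 * π * I * ξ₀ * τ) * exp (-2 * π * I * ω * τ)
        = exp (2 * π * I * (ξ₀ - ω : ℝ) * t) *
          exp (conj (-2 * π * I * (ξ₀ - ω : ℝ) * (τ - t : ℝ))) := by
      rw [← Complex.exp_add, ← Complex.exp_add]
      congr 1
      simp only [map_mul, map_neg, map_ofNat, conj_ofReal, conj_I]
      push_cast
      ring
    rw [mul_right_comm, phase, map_mul _ (g (τ - t)), ← exp_conj]
    ring
  rw [stftFreqInv]
  simp_rw [integrand_shift]
  rw [integral_const_mul, integral_conj,
    integral_sub_right_eq_self (fun u : ℝ => g u * exp (-2 * π * I * (ξ₀ - ω : ℝ) * u)) t,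
    fourierTf]

/-- Lemma 1, CIF of a sinusoid: For the sinusoid `x τ = exp(2πiξ₀τ)` and
`g` continuously differentiable with `g, g' ∈ L¹`, for all `t, ω` with `ĝ (ξ₀ − ω) ≠ 0`,
`−(1/(2π)) · Im (V_{g'} x (t, ω) / V_g x (t, ω)) = ξ₀ − ω`. -/
theorem cif_of_sinusoid
    (ξ₀ : ℝ)
    (x : ℝ → ℂ)
    (hx : x = fun τ : ℝ => Complex.exp (2 * Real.pi * Complex.I * (ξ₀ : ℂ) * (τ : ℂ)))
    (g : ℝ → ℂ)
    (hg_smooth : ContDiff ℝ 1 g)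
    (hg : Integrable g (volume : Measure ℝ))
    (hg' : Integrable (deriv g) (volume : Measure ℝ)) :
    ∀ t ω : ℝ, fourierTf g (ξ₀ - ω) ≠ 0 →
      -(1 / (2 * Real.pi)) *
          (stftFreqInv (deriv g) x t ω / stftFreqInv g x t ω).im = ξ₀ - ω := by
  intro t ω hĝ
  subst hx
  have ratio : stftFreqInv (deriv g) (fun τ : ℝ => exp (2 * π * I * ξ₀ * τ)) t ω /
      stftFreqInv g (fun τ : ℝ => exp (2 * π * I * ξ₀ * τ)) t ω
        = (-(2 * π * (ξ₀ - ω)) : ℝ) * I := by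
    rw [stftFreqInv_sinusoid, stftFreqInv_sinusoid,
      fourierTf_deriv hg (hg_smooth.differentiable one_ne_zero) hg', map_mul,
      mul_div_mul_left _ _ (Complex.exp_ne_zero _),
      mul_div_cancel_right₀ _ ((map_ne_zero conj).mpr hĝ)]
    simp only [map_mul, map_ofNat, conj_ofReal, conj_I]
    push_cast
    ring
  rw [ratio, mul_I_im, ofReal_re]
  field_simp [pi_ne_zero]
end

section
/- (Sawtooth claim of Lemma 4: LGD of a Dirac comb.) Let T > 0 and let μ = ∑_{ℓ ∈ ℤ} δ_{ℓT} be the Dirac comb measure with period T (the sum of Dirac measures at the points ℓT, ℓ ∈ ℤ). Let g : ℝ → ℂ satisfy g(u) = 0 for all u outside the interval [−T/2, T/2). Fix t, ω ∈ ℝ and let ℓ₀ ∈ ℤ be such that ℓ₀T − t ∈ [−T/2, T/2) and g(ℓ₀T − t) ≠ 0. Then Re( (∫_ℝ (τ − t) · conj(g(τ − t)) · exp(−2πiω(τ − t)) dμ(τ)) / (∫_ℝ conj(g(τ − t)) · exp(−2πiω(τ − t)) dμ(τ)) ) = ℓ₀T − t; in particular, as a function of t the local group delay of the Dirac comb is the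 T-periodic sawtooth t ↦ ℓ₀(t)·T − t. -/
open MeasureTheory Complex Real

/-! Since the support window of `g` has length `T`, exactly one tooth `ℓ₀T` of the comb meets it,
so both STFT integrals collapse to evaluations at `τ = ℓ₀T` and their ratio is `ℓ₀T − t`. -/

theorem MeasureTheory.integral_sum_dirac_eq_of_eq_zero {ι X E : Type*} [Countable ι]
    [MeasurableSpace X] [MeasurableSingletonClass X] [NormedAddCommGroup E] [NormedSpace ℝ E]
    [CompleteSpace E] {x : ι → X} {f : X → E} (i₀ : ι) (hf : ∀ i, i ≠ i₀ → f (x i) = 0) :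
    ∫ y, f y ∂Measure.sum (fun i ↦ Measure.dirac (x i)) = f (x i₀) := by
  have hsupp : ∀ i ∉ ({i₀} : Finset ι), (1 : ENNReal).toReal * ‖f (x i)‖ = 0 := fun i hi ↦ by
    simp [hf i (by simpa using hi)]
  have h := integral_sum_dirac_eq_tsum (fun _ ↦ ENNReal.one_ne_top)
    (summable_of_ne_finset_zero hsupp)
  simp only [one_smul, ENNReal.toReal_one] at h
  rw [h, tsum_eq_single i₀ hf]

theorem Int.eq_of_mul_sub_mem_Ico {T : ℝ} (hT : 0 < T) {a t : ℝ} {ℓ ℓ₀ : ℤ}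
    (h : ℓ * T - t ∈ Set.Ico a (a + T)) (h₀ : ℓ₀ * T - t ∈ Set.Ico a (a + T)) : ℓ = ℓ₀ := by
  have hdiv : ∀ n : ℤ, n * T - t ∈ Set.Ico a (a + T) → toIcoDiv hT a (-t) = -n := fun n hn ↦
    toIcoDiv_eq_of_sub_zsmul_mem_Ico hT (by
      rw [neg_zsmul, sub_neg_eq_add, zsmul_eq_mul, neg_add_eq_sub]; exact hn)
  simpa using (hdiv ℓ h).symm.trans (hdiv ℓ₀ h₀)

/-- Sawtooth claim of Lemma 4, LGD of a Dirac comb: Let `T > 0` and let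
`μ = ∑_{ℓ ∈ ℤ} δ_{ℓT}` be the Dirac comb of period `T`. Suppose `g` vanishes outside
`[−T/2, T/2)`. Fix `t, ω` and `ℓ₀ ∈ ℤ` with `ℓ₀T − t ∈ [−T/2, T/2)` and
`g (ℓ₀T − t) ≠ 0`. Then the LGD of the Dirac comb is
`Re (V^t_{Tg} μ (t, ω) / V^t_g μ (t, ω)) = ℓ₀T − t` (the `T`-periodic sawtooth as a
function of `t`). -/
theorem lgd_of_dirac_comb
    (T : ℝ) (hT : 0 < T)
    (g : ℝ → ℂ)
    (hsupp : ∀ u : ℝ, u ∉ Set.Ico (-(T / 2)) (T / 2) → g u = 0)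
    (t ω : ℝ) (ℓ₀ : ℤ)
    (hℓ₀ : (ℓ₀ : ℝ) * T - t ∈ Set.Ico (-(T / 2)) (T / 2))
    (hgne : g ((ℓ₀ : ℝ) * T - t) ≠ 0) :
    ((∫ τ : ℝ, ((τ : ℂ) - (t : ℂ)) * (starRingEnd ℂ) (g (τ - t)) *
          Complex.exp (-2 * Real.pi * Complex.I * (ω : ℂ) * ((τ : ℂ) - (t : ℂ)))
          ∂(Measure.sum fun ℓ : ℤ => Measure.dirac ((ℓ : ℝ) * T))) /
        (∫ τ : ℝ, (starRingEnd ℂ) (g (τ - t)) *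
          Complex.exp (-2 * Real.pi * Complex.I * (ω : ℂ) * ((τ : ℂ) - (t : ℂ)))
          ∂(Measure.sum fun ℓ : ℤ => Measure.dirac ((ℓ : ℝ) * T)))).re =
      (ℓ₀ : ℝ) * T - t := by
  have hwindow : Set.Ico (-(T / 2)) (T / 2) = Set.Ico (-(T / 2)) (-(T / 2) + T) := by
    congr 1; ring
  have hg_off : ∀ ℓ : ℤ, ℓ ≠ ℓ₀ → g (ℓ * T - t) = 0 := fun ℓ hℓ ↦
    hsupp _ fun hmem ↦ hℓ <| Int.eq_of_mul_sub_mem_Ico hT (hwindow ▸ hmem) (hwindow ▸ hℓ₀)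
  rw [integral_sum_dirac_eq_of_eq_zero ℓ₀ fun ℓ hℓ ↦ by simp [hg_off ℓ hℓ],
    integral_sum_dirac_eq_of_eq_zero ℓ₀ fun ℓ hℓ ↦ by simp [hg_off ℓ hℓ],
    mul_assoc, mul_div_assoc, div_self (mul_ne_zero (by simpa using hgne) (Complex.exp_ne_zero _))]
  simp
end
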